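/- (Theorem 7.1, uniform boundedness and ultimate bound) For all t ≥ 0, ‖e(t) + x̃(t)‖_∞ ≤ √(ρ* / λ_min(P)) · (1 + √(κ λ_max(P) / (2 ξ λ_min(R)))), where ρ* := max( V*(e(0), W̃(0), 0, 0), γ^{-1} ‖Λ‖_F w̃_max² + c₄ λ_max(P) / ((1 − ξ) λ_min(R)) ); since x(t) − x_ri(t) = e(t) + x̃(t), this establishes uniform boundedness of the distance between the plant state and the ideal reference state under time-varying uncertainties. -/

import Mathlib

open Matrix Filter

noncomputable section

/-- Euclidean norm ‖·‖₂ of a vector. -/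
def norm2 {n : ℕ} (v : Fin n → ℝ) : ℝ := Real.sqrt (∑ i, v i ^ 2)

/-- Supremum (infinity) norm ‖·‖_∞ of a vector (the sup norm on `Fin n → ℝ`). -/
def normInf {n : ℕ} (v : Fin n → ℝ) : ℝ := ‖v‖

/-- Frobenius norm ‖·‖_F of a matrix. -/
def normF {N m : ℕ} (W : Matrix (Fin N) (Fin m) ℝ) : ℝ := Real.sqrt (∑ i, ∑ j, W i j ^ 2)

/-- Smallest eigenvalue λ_min of a real symmetric (Hermitian) matrix. -/
def lamMin {n : ℕ} {A : Matrix (Fin n) (Fin n) ℝ} (hA : A.IsHermitian) : ℝ := ⨅ i, hA.eigenvalues i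

/-- Largest eigenvalue λ_max of a real symmetric (Hermitian) matrix. -/
def lamMax {n : ℕ} {A : Matrix (Fin n) (Fin n) ℝ} (hA : A.IsHermitian) : ℝ := ⨆ i, hA.eigenvalues i

/-- A real square matrix is Hurwitz if every (complex) eigenvalue has negative real part. -/
def Hurwitz {n : ℕ} (A : Matrix (Fin n) (Fin n) ℝ) : Prop :=
  ∀ μ : ℂ, (A.map Complex.ofReal).charpoly.IsRoot μ → μ.re < 0

/-- The Lyapunov function V(e, W̃) = eᵀ P e + γ⁻¹ tr((W̃ Λ^{1/2})ᵀ (W̃ Λ^{1/2})). -/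
def Vlyap {n N m : ℕ} (γ : ℝ) (P : Matrix (Fin n) (Fin n) ℝ)
    (Lhalf : Matrix (Fin m) (Fin m) ℝ) (e : Fin n → ℝ) (W : Matrix (Fin N) (Fin m) ℝ) : ℝ :=
  e ⬝ᵥ (P *ᵥ e) + γ⁻¹ * ((W * Lhalf)ᵀ * (W * Lhalf)).trace

/-- The augmented Lyapunov function V* of Theorem 5.1. -/
def Vstar {n N m : ℕ} (γ κ η ξ : ℝ) (P R : Matrix (Fin n) (Fin n) ℝ)
    (hP : P.IsHermitian) (hR : R.IsHermitian)
    (Lhalf : Matrix (Fin m) (Fin m) ℝ)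
    (e : Fin n → ℝ) (W : Matrix (Fin N) (Fin m) ℝ) (eL xt : Fin n → ℝ) : ℝ :=
  Vlyap γ P Lhalf e W + η⁻¹ * κ * (eL ⬝ᵥ (P *ᵥ eL))
    + 2 * ξ * κ⁻¹ * (lamMax hP)⁻¹ * lamMin hR * (xt ⬝ᵥ (P *ᵥ xt))

/-!
Along trajectories `V*` satisfies `V̇* ≤ α (K - V*)` with `α = (1 - ξ) λ_min(R) / λ_max(P)` and
`K` the second entry of `ρ*`. The Lyapunov equation turns each `A_r`-term into `-vᵀ R v`; the
projection property cancels the weight-error cross term of `ė` against the update law, and the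
weight drift costs at most `c₄`; Young's inequality absorbs the modification cross term
`2 c κ x̃ᵀ P (e - e_L)` into `-2 κ (e - e_L)ᵀ P (e - e_L)` plus a `ξ`-fraction of `-c x̃ᵀ R x̃`,
where `c = 2 ξ λ_min(R) / (κ λ_max(P))` is the weight of `x̃` in `V*`. Grönwall then gives
`V* ≤ ρ*`, hence `eᵀ P e ≤ ρ*` and `c x̃ᵀ P x̃ ≤ ρ*`, and the sup norm is at most the Euclidean one.
-/

namespace Matrix

section QuadraticForm

variable {ι : Type*} [Fintype ι]

lemma IsHermitian.dotProduct_mulVec_comm {P : Matrix ι ι ℝ} (hP : P.IsHermitian)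
    (a b : ι → ℝ) : a ⬝ᵥ (P *ᵥ b) = b ⬝ᵥ (P *ᵥ a) := by
  rw [dotProduct_mulVec, dotProduct_comm, ← mulVec_transpose,
    ← conjTranspose_eq_transpose_of_trivial, hP.eq]

lemma PosSemidef.mul_dotProduct_mulVec_le {P : Matrix ι ι ℝ} (hP : P.PosSemidef)
    (c : ℝ) (a b : ι → ℝ) :
    c * (a ⬝ᵥ (P *ᵥ b)) ≤ c ^ 2 / 4 * (a ⬝ᵥ (P *ᵥ a)) + b ⬝ᵥ (P *ᵥ b) := by
  have h := hP.dotProduct_mulVec_nonneg ((c / 2) • a - b)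
  simp only [star_trivial, mulVec_sub, mulVec_smul, sub_dotProduct, dotProduct_sub,
    smul_dotProduct, dotProduct_smul, smul_eq_mul, hP.1.dotProduct_mulVec_comm b a] at h
  linarith

lemma two_mul_dotProduct_mulVec_mulVec_of_lyapunov {Ar P R : Matrix ι ι ℝ}
    (hP : P.IsHermitian) (hLyap : Arᵀ * P + P * Ar + R = 0) (v : ι → ℝ) :
    2 * (v ⬝ᵥ (P *ᵥ (Ar *ᵥ v))) = -(v ⬝ᵥ (R *ᵥ v)) := by
  have hR : R = -(Arᵀ * P) - P * Ar := by
    rw [← sub_eq_zero, ← hLyap]; abel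
  have hAr : v ⬝ᵥ ((Arᵀ * P) *ᵥ v) = v ⬝ᵥ (P *ᵥ (Ar *ᵥ v)) := by
    rw [← mulVec_mulVec, mulVec_transpose, dotProduct_comm, ← dotProduct_mulVec,
      dotProduct_comm]
    exact hP.dotProduct_mulVec_comm _ _
  rw [hR, sub_mulVec, neg_mulVec, dotProduct_sub, dotProduct_neg, hAr, ← mulVec_mulVec]
  ring

variable [DecidableEq ι]

lemma IsHermitian.exists_dotProduct_mulVec_eq_sum_eigenvalues {P : Matrix ι ι ℝ}
    (hP : P.IsHermitian) (v : ι → ℝ) :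
    ∃ w : ι → ℝ, v ⬝ᵥ (P *ᵥ v) = ∑ i, hP.eigenvalues i * w i ^ 2 ∧
      v ⬝ᵥ v = ∑ i, w i ^ 2 := by
  set U : Matrix ι ι ℝ := (hP.eigenvectorUnitary : Matrix ι ι ℝ)
  have hUU : U * star U = 1 := mem_unitaryGroup_iff.mp hP.eigenvectorUnitary.2
  have hadj : ∀ z, v ⬝ᵥ (U *ᵥ z) = (star U *ᵥ v) ⬝ᵥ z := fun z => by
    rw [dotProduct_mulVec, star_eq_conjTranspose, conjTranspose_eq_transpose_of_trivial,
      mulVec_transpose]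
  refine ⟨star U *ᵥ v, ?_, ?_⟩
  · conv_lhs => rw [hP.spectral_theorem, Unitary.conjStarAlgAut_apply]
    rw [← mulVec_mulVec, ← mulVec_mulVec, hadj]
    simp [mulVec_diagonal, dotProduct, sq, mul_left_comm, U]
  · have := hadj (star U *ᵥ v)
    rw [mulVec_mulVec, hUU, one_mulVec] at this
    rw [this]
    simp [dotProduct, sq]

end QuadraticForm

end Matrix

lemma HasDerivAt.dotProduct_mulVec_self {ι : Type*} [Fintype ι] {P : Matrix ι ι ℝ}
    (hP : P.IsHermitian) {u : ℝ → ι → ℝ} {u' : ι → ℝ} {t : ℝ} (hu : HasDerivAt u u' t) :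
    HasDerivAt (fun s => u s ⬝ᵥ (P *ᵥ u s)) (2 * (u t ⬝ᵥ (P *ᵥ u'))) t := by
  have hi : ∀ i, HasDerivAt (fun s => u s i) (u' i) t := hasDerivAt_pi.mp hu
  have hsum : HasDerivAt (fun s => ∑ i, u s i * ∑ j, P i j * u s j)
      (∑ i, (u' i * ∑ j, P i j * u t j + u t i * ∑ j, P i j * u' j)) t :=
    HasDerivAt.fun_sum fun i _ =>
      (hi i).mul (HasDerivAt.fun_sum fun j _ => (hi j).const_mul (P i j))
  convert hsum using 1
  · rfl
  rw [Finset.sum_add_distrib, two_mul]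
  change _ = u' ⬝ᵥ (P *ᵥ u t) + u t ⬝ᵥ (P *ᵥ u')
  rw [hP.dotProduct_mulVec_comm u']

lemma normF_nonneg {N m : ℕ} (A : Matrix (Fin N) (Fin m) ℝ) : 0 ≤ normF A := Real.sqrt_nonneg _

namespace Matrix

section TraceForms

variable {ι κ ι' : Type*} [Fintype ι] [Fintype κ] [Fintype ι']

lemma trace_mul_vecMulVec_vecMul {R : Type*} [CommRing R] (X : Matrix ι κ R) (a : κ → R)
    (v : ι' → R) (A : Matrix ι' ι R) :
    (X * vecMulVec a (v ᵥ* A)).trace = v ⬝ᵥ ((A * X) *ᵥ a) := by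
  rw [mul_vecMulVec, trace_vecMulVec, dotProduct_comm, ← dotProduct_mulVec, mulVec_mulVec]

lemma IsSymm.trace_transpose_mul_mul {R : Type*} [CommRing R] {L : Matrix κ κ R}
    (hL : L.IsSymm) (A B : Matrix ι κ R) :
    ((A * L)ᵀ * (B * L)).trace = (L * L * Aᵀ * B).trace := by
  rw [transpose_mul, hL.eq, ← Matrix.mul_assoc, trace_mul_comm, ← Matrix.mul_assoc,
    ← Matrix.mul_assoc]

lemma hasDerivAt_trace_transpose_mul_self (L : Matrix κ ι' ℝ) {W : ℝ → Matrix ι κ ℝ}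
    {W' : Matrix ι κ ℝ} {t : ℝ} (hW : ∀ i j, HasDerivAt (fun s => W s i j) (W' i j) t) :
    HasDerivAt (fun s => ((W s * L)ᵀ * (W s * L)).trace)
      (2 * ((W t * L)ᵀ * (W' * L)).trace) t := by
  have hWL : ∀ i j, HasDerivAt (fun s => (W s * L) i j) ((W' * L) i j) t := fun i j =>
    HasDerivAt.fun_sum fun k _ => (hW i k).mul_const (L k j)
  have hsum : HasDerivAt (fun s => ∑ j, ∑ i, (W s * L) i j * (W s * L) i j)
      (∑ j, ∑ i, ((W' * L) i j * (W t * L) i j + (W t * L) i j * (W' * L) i j)) t :=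
    HasDerivAt.fun_sum fun j _ => HasDerivAt.fun_sum fun i _ => (hWL i j).mul (hWL i j)
  convert hsum using 1
  · rfl
  simp only [Matrix.trace, Finset.mul_sum]
  refine Finset.sum_congr rfl fun j _ => ?_
  rw [diag_apply, mul_apply, Finset.mul_sum]
  exact Finset.sum_congr rfl fun i _ => by rw [transpose_apply]; ring

end TraceForms

section Frobenius

attribute [local instance] frobeniusNormedAddCommGroup

variable {m n : ℕ}

lemma normF_eq_frobenius_norm (A : Matrix (Fin m) (Fin n) ℝ) : normF A = ‖A‖ := by
  simp [normF, frobenius_norm_def, Real.sqrt_eq_rpow]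

lemma trace_transpose_mul_eq_inner (A B : Matrix (Fin m) (Fin n) ℝ) :
    (Aᵀ * B).trace = inner ℝ (WithLp.toLp 2 fun i => WithLp.toLp 2 (A i))
      (WithLp.toLp 2 fun i => WithLp.toLp 2 (B i)) := by
  simp only [trace, diag, mul_apply, transpose_apply, PiLp.inner_apply]
  rw [Finset.sum_comm]
  simp [mul_comm]

lemma trace_transpose_mul_self_nonneg (A : Matrix (Fin m) (Fin n) ℝ) : 0 ≤ (Aᵀ * A).trace := by
  rw [trace_transpose_mul_eq_inner]
  exact real_inner_self_nonneg

lemma abs_trace_mul_transpose_mul_le (D : Matrix (Fin n) (Fin n) ℝ)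
    (X Y : Matrix (Fin m) (Fin n) ℝ) :
    |(D * Xᵀ * Y).trace| ≤ normF D * normF X * normF Y := by
  have hD : D * Xᵀ = (X * Dᵀ)ᵀ := by rw [transpose_mul, transpose_transpose]
  rw [hD, trace_transpose_mul_eq_inner, normF_eq_frobenius_norm, normF_eq_frobenius_norm,
    normF_eq_frobenius_norm]
  refine (abs_real_inner_le_norm _ _).trans ?_
  change ‖X * Dᵀ‖ * ‖Y‖ ≤ _
  calc _ ≤ ‖X‖ * ‖Dᵀ‖ * ‖Y‖ := by gcongr; exact frobenius_norm_mul X Dᵀ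
    _ = ‖D‖ * ‖X‖ * ‖Y‖ := by rw [frobenius_norm_transpose, mul_comm ‖X‖]

end Frobenius

end Matrix

section Eigenvalues

variable {n : ℕ} {A : Matrix (Fin n) (Fin n) ℝ}

lemma lamMin_le_eigenvalues (hA : A.IsHermitian) (i : Fin n) : lamMin hA ≤ hA.eigenvalues i :=
  ciInf_le (Set.finite_range _).bddBelow i

lemma eigenvalues_le_lamMax (hA : A.IsHermitian) (i : Fin n) : hA.eigenvalues i ≤ lamMax hA :=
  le_ciSup (Set.finite_range _).bddAbove i

lemma lamMin_mul_dotProduct_self_le (hA : A.IsHermitian) (v : Fin n → ℝ) :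
    lamMin hA * (v ⬝ᵥ v) ≤ v ⬝ᵥ (A *ᵥ v) := by
  obtain ⟨w, hq, hv⟩ := hA.exists_dotProduct_mulVec_eq_sum_eigenvalues v
  rw [hq, hv, Finset.mul_sum]
  gcongr with i
  exact lamMin_le_eigenvalues hA i

lemma dotProduct_mulVec_le_lamMax_mul (hA : A.IsHermitian) (v : Fin n → ℝ) :
    v ⬝ᵥ (A *ᵥ v) ≤ lamMax hA * (v ⬝ᵥ v) := by
  obtain ⟨w, hq, hv⟩ := hA.exists_dotProduct_mulVec_eq_sum_eigenvalues v
  rw [hq, hv, Finset.mul_sum]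
  gcongr with i
  exact eigenvalues_le_lamMax hA i

lemma lamMin_pos (hn : 0 < n) (hA : A.PosDef) : 0 < lamMin hA.1 := by
  have : Nonempty (Fin n) := ⟨⟨0, hn⟩⟩
  obtain ⟨i, hi⟩ := exists_eq_ciInf_of_finite (f := hA.1.eigenvalues)
  rw [lamMin, ← hi]
  exact hA.eigenvalues_pos i

lemma lamMax_pos (hn : 0 < n) (hA : A.PosDef) : 0 < lamMax hA.1 :=
  (lamMin_pos hn hA).trans_le
    ((lamMin_le_eigenvalues hA.1 ⟨0, hn⟩).trans (eigenvalues_le_lamMax hA.1 ⟨0, hn⟩))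

lemma lamMin_div_lamMax_mul_le (hn : 0 < n) {P R : Matrix (Fin n) (Fin n) ℝ} (hP : P.PosDef)
    (hR : R.PosDef) (v : Fin n → ℝ) :
    lamMin hR.1 / lamMax hP.1 * (v ⬝ᵥ (P *ᵥ v)) ≤ v ⬝ᵥ (R *ᵥ v) := by
  have hPmax := lamMax_pos hn hP
  calc lamMin hR.1 / lamMax hP.1 * (v ⬝ᵥ (P *ᵥ v))
      ≤ lamMin hR.1 / lamMax hP.1 * (lamMax hP.1 * (v ⬝ᵥ v)) := by
        gcongr
        · exact div_nonneg (lamMin_pos hn hR).le hPmax.le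
        · exact dotProduct_mulVec_le_lamMax_mul hP.1 v
    _ = lamMin hR.1 * (v ⬝ᵥ v) := by field_simp
    _ ≤ v ⬝ᵥ (R *ᵥ v) := lamMin_mul_dotProduct_self_le hR.1 v

end Eigenvalues

lemma norm_sq_le_dotProduct_self {ι : Type*} [Fintype ι] (v : ι → ℝ) : ‖v‖ ^ 2 ≤ v ⬝ᵥ v := by
  have hv : 0 ≤ v ⬝ᵥ v := Finset.sum_nonneg fun i _ => mul_self_nonneg (v i)
  refine (Real.le_sqrt (norm_nonneg v) hv).mp ((pi_norm_le_iff_of_nonneg (Real.sqrt_nonneg _)).mpr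
    fun i => Real.abs_le_sqrt ?_)
  rw [sq]
  exact Finset.single_le_sum (f := fun j => v j * v j) (fun j _ => mul_self_nonneg (v j))
    (Finset.mem_univ i)

lemma norm_le_sqrt_of_dotProduct_mulVec_le {n : ℕ} {P : Matrix (Fin n) (Fin n) ℝ}
    (hP : P.IsHermitian) (hpos : 0 < lamMin hP) {v : Fin n → ℝ} {K : ℝ}
    (hv : v ⬝ᵥ (P *ᵥ v) ≤ K) : ‖v‖ ≤ √(K / lamMin hP) := by
  refine Real.le_sqrt_of_sq_le ?_
  rw [le_div_iff₀' hpos]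
  calc lamMin hP * ‖v‖ ^ 2 ≤ lamMin hP * (v ⬝ᵥ v) := by
        gcongr; exact norm_sq_le_dotProduct_self v
    _ ≤ K := (lamMin_mul_dotProduct_self_le hP v).trans hv

lemma le_max_of_hasDerivAt_le_mul_sub {f : ℝ → ℝ} {α K : ℝ} (hα : 0 < α)
    (hf : ∀ t ≥ (0 : ℝ), ∃ D, HasDerivAt f D t ∧ D ≤ α * (K - f t)) :
    ∀ t ≥ (0 : ℝ), f t ≤ max (f 0) K := by
  choose D hD hDle using hf
  set f' : ℝ → ℝ := fun x => if hx : 0 ≤ x then D x hx else 0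
  have hf' : ∀ x (hx : 0 ≤ x), f' x = D x hx := fun x hx => dif_pos hx
  intro t ht
  have hgron := le_gronwallBound_of_liminf_deriv_right_le (f' := f') (K := -α) (ε := α * K)
    (fun x hx => (hD x hx.1).continuousAt.continuousWithinAt)
    (fun x hx r hr => (hD x hx.1).hasDerivWithinAt.liminf_right_slope_le (hf' x hx.1 ▸ hr))
    le_rfl (fun x hx => by rw [hf' x hx.1]; linarith [hDle x hx.1]) t ⟨ht, le_rfl⟩
  rw [gronwallBound_of_K_ne_0 (neg_ne_zero.mpr hα.ne'), sub_zero] at hgron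
  have hexp : Real.exp (-α * t) ≤ 1 := Real.exp_le_one_iff.mpr (by nlinarith)
  have hexp' : 0 < Real.exp (-α * t) := Real.exp_pos _
  have hK : α * K / -α = -K := by field_simp
  rw [hK] at hgron
  -- `hgron` bounds `f t` by a convex combination of `f 0` and `K`, with weight `exp (-α t)`.
  nlinarith [le_max_left (f 0) K, le_max_right (f 0) K]

section ClosedLoop

variable {n N m : ℕ} {Ar P R : Matrix (Fin n) (Fin n) ℝ} {B : Matrix (Fin n) (Fin m) ℝ}
  {Lam L : Matrix (Fin m) (Fin m) ℝ} {γ κ η ξ : ℝ}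

lemma hasDerivAt_Vstar (hP : P.IsHermitian) (hR : R.IsHermitian) {e eL xt : ℝ → Fin n → ℝ}
    {W : ℝ → Matrix (Fin N) (Fin m) ℝ} {e' eL' xt' : Fin n → ℝ} {W' : Matrix (Fin N) (Fin m) ℝ}
    {t : ℝ} (he : HasDerivAt e e' t) (heL : HasDerivAt eL eL' t) (hxt : HasDerivAt xt xt' t)
    (hW : ∀ i j, HasDerivAt (fun s => W s i j) (W' i j) t) :
    HasDerivAt (fun s => Vstar γ κ η ξ P R hP hR L (e s) (W s) (eL s) (xt s))
      (2 * (e t ⬝ᵥ (P *ᵥ e')) + γ⁻¹ * (2 * ((W t * L)ᵀ * (W' * L)).trace)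
        + η⁻¹ * κ * (2 * (eL t ⬝ᵥ (P *ᵥ eL')))
        + 2 * ξ * κ⁻¹ * (lamMax hP)⁻¹ * lamMin hR * (2 * (xt t ⬝ᵥ (P *ᵥ xt')))) t :=
  (((he.dotProduct_mulVec_self hP).add
    ((hasDerivAt_trace_transpose_mul_self L hW).const_mul γ⁻¹)).add
    ((heL.dotProduct_mulVec_self hP).const_mul _)).add ((hxt.dotProduct_mulVec_self hP).const_mul _)

lemma deriv_Vstar_state_le (hn : 0 < n) (hP : P.PosDef) (hR : R.PosDef)
    (hLyap : Arᵀ * P + P * Ar + R = 0) (hκ : 0 < κ) (hη : 0 < η) (hξ0 : 0 < ξ)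
    (e eL x : Fin n → ℝ) :
    2 * (e ⬝ᵥ (P *ᵥ (Ar *ᵥ e - κ • (e - eL))))
      + η⁻¹ * κ * (2 * (eL ⬝ᵥ (P *ᵥ (Ar *ᵥ eL + η • (e - eL)))))
      + 2 * ξ * κ⁻¹ * (lamMax hP.1)⁻¹ * lamMin hR.1 * (2 * (x ⬝ᵥ (P *ᵥ (Ar *ᵥ x + κ • (e - eL)))))
      ≤ -((1 - ξ) * (lamMin hR.1 / lamMax hP.1)) * (e ⬝ᵥ (P *ᵥ e)
        + η⁻¹ * κ * (eL ⬝ᵥ (P *ᵥ eL))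
        + 2 * ξ * κ⁻¹ * (lamMax hP.1)⁻¹ * lamMin hR.1 * (x ⬝ᵥ (P *ᵥ x))) := by
  set r := lamMin hR.1 / lamMax hP.1
  set c := 2 * ξ * κ⁻¹ * (lamMax hP.1)⁻¹ * lamMin hR.1
  set a := e - eL with ha
  have hPmax := lamMax_pos hn hP
  have hr : 0 ≤ r := div_nonneg (lamMin_pos hn hR).le hPmax.le
  have hc : 0 ≤ c := by have := (lamMin_pos hn hR).le; positivity
  have hcκ : c * κ = 2 * ξ * r := by simp only [c, r]; field_simp
  have hq : ∀ v, 0 ≤ v ⬝ᵥ (P *ᵥ v) := by simpa using hP.posSemidef.dotProduct_mulVec_nonneg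
  have hLy := two_mul_dotProduct_mulVec_mulVec_of_lyapunov hP.1 hLyap
  have hRay := lamMin_div_lamMax_mul_le hn hP hR
  have hYoung := hP.posSemidef.mul_dotProduct_mulVec_le c x a
  have hsplit : e ⬝ᵥ (P *ᵥ a) - eL ⬝ᵥ (P *ᵥ a) = a ⬝ᵥ (P *ᵥ a) := by rw [ha, ← sub_dotProduct]
  simp only [mulVec_add, mulVec_sub, mulVec_smul, dotProduct_add, dotProduct_sub,
    dotProduct_smul, smul_eq_mul]
  have hηκ : 0 ≤ η⁻¹ * κ := by positivity
  calc _ = -(e ⬝ᵥ (R *ᵥ e)) - η⁻¹ * κ * (eL ⬝ᵥ (R *ᵥ eL)) - c * (x ⬝ᵥ (R *ᵥ x))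
        - 2 * κ * (a ⬝ᵥ (P *ᵥ a)) + 2 * κ * (c * (x ⬝ᵥ (P *ᵥ a))) := by
        linear_combination hLy e + η⁻¹ * κ * hLy eL + c * hLy x - 2 * κ * hsplit
          + 2 * κ * (eL ⬝ᵥ (P *ᵥ a)) * inv_mul_cancel₀ hη.ne'
    _ ≤ -(e ⬝ᵥ (R *ᵥ e)) - η⁻¹ * κ * (eL ⬝ᵥ (R *ᵥ eL)) - c * (x ⬝ᵥ (R *ᵥ x))
        + ξ * r * c * (x ⬝ᵥ (P *ᵥ x)) := by
        have := mul_le_mul_of_nonneg_left hYoung (by positivity : (0 : ℝ) ≤ 2 * κ)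
        linear_combination this + c * (x ⬝ᵥ (P *ᵥ x)) / 2 * hcκ
    _ ≤ -(r * (e ⬝ᵥ (P *ᵥ e))) - η⁻¹ * κ * (r * (eL ⬝ᵥ (P *ᵥ eL))) - c * (r * (x ⬝ᵥ (P *ᵥ x)))
        + ξ * r * c * (x ⬝ᵥ (P *ᵥ x)) := by
        gcongr <;> exact hRay _
    _ ≤ _ := by
        linear_combination mul_nonneg (mul_nonneg hξ0.le hr) (hq e)
          + mul_nonneg (mul_nonneg (mul_nonneg hξ0.le hr) hηκ) (hq eL)

lemma deriv_Vstar_weights_le (hL : L.IsSymm) (hLL : L * L = Lam) (hγ : 0 < γ) {σ : Fin N → ℝ}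
    {e : Fin n → ℝ} {W U Wdot : Matrix (Fin N) (Fin m) ℝ} {wdotmax wtilmax : ℝ}
    (hWdot : normF Wdot ≤ wdotmax) (hW : normF W ≤ wtilmax)
    (hUproj : ((Lam * Wᵀ) * (U - vecMulVec σ (e ᵥ* (P * B)))).trace ≤ 0) :
    -(2 * (e ⬝ᵥ (P *ᵥ ((B * Lam * Wᵀ) *ᵥ σ))))
        + γ⁻¹ * (2 * ((W * L)ᵀ * ((γ • U - Wdot) * L)).trace)
      ≤ 2 * γ⁻¹ * normF Lam * wtilmax * wdotmax := by
  have hproj : (Lam * Wᵀ * U).trace ≤ e ⬝ᵥ (P *ᵥ ((B * Lam * Wᵀ) *ᵥ σ)) := by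
    rw [Matrix.mul_sub, trace_sub, sub_nonpos, trace_mul_vecMulVec_vecMul] at hUproj
    simpa only [mulVec_mulVec, Matrix.mul_assoc] using hUproj
  have hsplit : ((W * L)ᵀ * ((γ • U - Wdot) * L)).trace
      = γ * (Lam * Wᵀ * U).trace - (Lam * Wᵀ * Wdot).trace := by
    rw [hL.trace_transpose_mul_mul, hLL, Matrix.mul_sub, Matrix.mul_smul, trace_sub, trace_smul,
      smul_eq_mul]
  have hdist : -(Lam * Wᵀ * Wdot).trace ≤ normF Lam * wtilmax * wdotmax :=
    (neg_le_abs _).trans <| (abs_trace_mul_transpose_mul_le Lam W Wdot).trans <|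
      mul_le_mul (mul_le_mul_of_nonneg_left hW (normF_nonneg Lam)) hWdot (normF_nonneg Wdot)
        (mul_nonneg (normF_nonneg Lam) ((normF_nonneg W).trans hW))
  have hdist' := mul_le_mul_of_nonneg_left hdist (inv_nonneg.mpr hγ.le)
  rw [hsplit]
  linear_combination 2 * hproj + 2 * hdist'
    + 2 * (Lam * Wᵀ * U).trace * inv_mul_cancel₀ hγ.ne'

lemma trace_transpose_mul_self_le (hL : L.IsSymm) (hLL : L * L = Lam)
    {W : Matrix (Fin N) (Fin m) ℝ} {wtilmax : ℝ} (hW : normF W ≤ wtilmax) :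
    ((W * L)ᵀ * (W * L)).trace ≤ normF Lam * wtilmax ^ 2 := by
  rw [hL.trace_transpose_mul_mul, hLL]
  refine (le_abs_self _).trans <| (abs_trace_mul_transpose_mul_le Lam W W).trans ?_
  rw [mul_assoc, sq]
  exact mul_le_mul_of_nonneg_left (mul_self_le_mul_self (normF_nonneg W) hW) (normF_nonneg Lam)

lemma exists_hasDerivAt_Vstar_le (hn : 0 < n) (hL : L.IsSymm) (hLL : L * L = Lam)
    (hR : R.PosDef) (hP : P.PosDef) (hLyap : Arᵀ * P + P * Ar + R = 0)
    (hγ : 0 < γ) (hκ : 0 < κ) (hη : 0 < η) (hξ0 : 0 < ξ) (hξ1 : ξ < 1) {σ : Fin N → ℝ}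
    {Wt : ℝ → Matrix (Fin N) (Fin m) ℝ} {U Wdot : Matrix (Fin N) (Fin m) ℝ}
    {wdotmax wtilmax : ℝ} {e eL xt : ℝ → Fin n → ℝ} {t : ℝ}
    (hWdot : normF Wdot ≤ wdotmax) (hWt : normF (Wt t) ≤ wtilmax)
    (he : HasDerivAt e (Ar *ᵥ e t - (B * Lam * (Wt t)ᵀ) *ᵥ σ - κ • (e t - eL t)) t)
    (heL : HasDerivAt eL (Ar *ᵥ eL t + η • (e t - eL t)) t)
    (hxt : HasDerivAt xt (Ar *ᵥ xt t + κ • (e t - eL t)) t)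
    (hWt' : ∀ i j, HasDerivAt (fun s => Wt s i j) (γ * U i j - Wdot i j) t)
    (hUproj : ((Lam * (Wt t)ᵀ) * (U - vecMulVec σ (e t ᵥ* (P * B)))).trace ≤ 0) :
    ∃ D, HasDerivAt (fun s => Vstar γ κ η ξ P R hP.1 hR.1 L (e s) (Wt s) (eL s) (xt s)) D t ∧
      D ≤ (1 - ξ) * lamMin hR.1 / lamMax hP.1 *
        (γ⁻¹ * normF Lam * wtilmax ^ 2
            + (2 * γ⁻¹ * normF Lam * wtilmax * wdotmax) * lamMax hP.1 / ((1 - ξ) * lamMin hR.1)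
          - Vstar γ κ η ξ P R hP.1 hR.1 L (e t) (Wt t) (eL t) (xt t)) := by
  refine ⟨_, hasDerivAt_Vstar hP.1 hR.1 he heL hxt (W' := γ • U - Wdot) hWt', ?_⟩
  have hstate := deriv_Vstar_state_le hn hP hR hLyap hκ hη hξ0 (e t) (eL t) (xt t)
  have hweights := deriv_Vstar_weights_le hL hLL hγ hWdot hWt hUproj
  have hα : 0 ≤ (1 - ξ) * lamMin hR.1 / lamMax hP.1 := by
    have := lamMin_pos hn hR
    have := lamMax_pos hn hP
    have : 0 < 1 - ξ := by linarith
    positivity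
  have hT := mul_le_mul_of_nonneg_left (trace_transpose_mul_self_le hL hLL hWt)
    (mul_nonneg hα (inv_nonneg.mpr hγ.le))
  have hc₄ : (1 - ξ) * lamMin hR.1 / lamMax hP.1
      * ((2 * γ⁻¹ * normF Lam * wtilmax * wdotmax) * lamMax hP.1 / ((1 - ξ) * lamMin hR.1))
      = 2 * γ⁻¹ * normF Lam * wtilmax * wdotmax := by
    have := (lamMin_pos hn hR).ne'
    have := (lamMax_pos hn hP).ne'
    have : 1 - ξ ≠ 0 := by linarith
    field_simp
  rw [sub_right_comm, mulVec_sub, dotProduct_sub]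
  simp only [Vstar, Vlyap]
  linear_combination hstate + hweights + hT - hc₄

lemma normInf_add_le_of_Vstar_le (hn : 0 < n) (hR : R.PosDef) (hP : P.PosDef) (hγ : 0 < γ)
    (hκ : 0 < κ) (hη : 0 < η) (hξ0 : 0 < ξ) {e eL xt : Fin n → ℝ}
    {W : Matrix (Fin N) (Fin m) ℝ} {M : ℝ} (hV : Vstar γ κ η ξ P R hP.1 hR.1 L e W eL xt ≤ M) :
    normInf (e + xt) ≤ √(M / lamMin hP.1) * (1 + √(κ * lamMax hP.1 / (2 * ξ * lamMin hR.1))) := by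
  set c := 2 * ξ * κ⁻¹ * (lamMax hP.1)⁻¹ * lamMin hR.1
  have hPmin := lamMin_pos hn hP
  have hPmax := lamMax_pos hn hP
  have hRmin := lamMin_pos hn hR
  have hc : 0 < c := by positivity
  have hq : ∀ v, 0 ≤ v ⬝ᵥ (P *ᵥ v) := by simpa using hP.posSemidef.dotProduct_mulVec_nonneg
  have hT := mul_nonneg (inv_nonneg.mpr hγ.le) (trace_transpose_mul_self_nonneg (W * L))
  have hqL := mul_nonneg (by positivity : 0 ≤ η⁻¹ * κ) (hq eL)
  simp only [Vstar, Vlyap] at hV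
  have hqe : e ⬝ᵥ (P *ᵥ e) ≤ M := by linarith [mul_nonneg hc.le (hq xt)]
  have hqx : xt ⬝ᵥ (P *ᵥ xt) ≤ M / c := by
    rw [le_div_iff₀' hc]
    linarith [hq e]
  have hM : 0 ≤ M / lamMin hP.1 := div_nonneg ((hq e).trans hqe) hPmin.le
  have hMc : M / c / lamMin hP.1
      = M / lamMin hP.1 * (κ * lamMax hP.1 / (2 * ξ * lamMin hR.1)) := by
    simp only [c]
    field_simp
  calc normInf (e + xt) ≤ ‖e‖ + ‖xt‖ := norm_add_le e xt
    _ ≤ √(M / lamMin hP.1) + √(M / c / lamMin hP.1) :=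
      add_le_add (norm_le_sqrt_of_dotProduct_mulVec_le hP.1 hPmin hqe)
        (norm_le_sqrt_of_dotProduct_mulVec_le hP.1 hPmin hqx)
    _ = _ := by rw [hMc, Real.sqrt_mul hM]; ring

end ClosedLoop

theorem statement17_general
    {n N m : ℕ} (hn : 0 < n)
    (Ar : Matrix (Fin n) (Fin n) ℝ) (B : Matrix (Fin n) (Fin m) ℝ)
    (Lam Lhalf : Matrix (Fin m) (Fin m) ℝ) (R P : Matrix (Fin n) (Fin n) ℝ)
    (hLhalfDiag : Lhalf.IsDiag) (hLhalfSq : Lhalf * Lhalf = Lam)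
    (hR : R.PosDef) (hP : P.PosDef)
    (hLyap : Arᵀ * P + P * Ar + R = 0)
    (γ κ η ξ : ℝ) (hγ : 0 < γ) (hκ : 0 < κ) (hη : 0 < η) (hξ0 : 0 < ξ) (hξ1 : ξ < 1)
    (σx : ℝ → Fin N → ℝ)
    (Wdot Wt U : ℝ → Matrix (Fin N) (Fin m) ℝ)
    (wdotmax wtilmax : ℝ)
    (hWdotbnd : ∀ t ≥ (0:ℝ), normF (Wdot t) ≤ wdotmax)
    (hWtbnd : ∀ t ≥ (0:ℝ), normF (Wt t) ≤ wtilmax)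
    (e eL xt : ℝ → Fin n → ℝ)
    (heL0 : eL 0 = 0) (hxt0 : xt 0 = 0)
    (he : ∀ t ≥ (0:ℝ), HasDerivAt e
          (Ar *ᵥ e t - (B * Lam * (Wt t)ᵀ) *ᵥ σx t - κ • (e t - eL t)) t)
    (heL : ∀ t ≥ (0:ℝ), HasDerivAt eL (Ar *ᵥ eL t + η • (e t - eL t)) t)
    (hxt : ∀ t ≥ (0:ℝ), HasDerivAt xt (Ar *ᵥ xt t + κ • (e t - eL t)) t)
    (hWt : ∀ t ≥ (0:ℝ), ∀ i j, HasDerivAt (fun s => Wt s i j)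
          (γ * U t i j - Wdot t i j) t)
    (hUproj : ∀ t ≥ (0:ℝ),
      ((Lam * (Wt t)ᵀ) * (U t - vecMulVec (σx t) ((e t) ᵥ* (P * B)))).trace ≤ 0)
    : ∀ t ≥ (0:ℝ),
      normInf (e t + xt t)
        ≤ Real.sqrt
            ((max (Vstar γ κ η ξ P R hP.1 hR.1 Lhalf (e 0) (Wt 0) 0 0)
                (γ⁻¹ * normF Lam * wtilmax ^ 2
                  + (2 * γ⁻¹ * normF Lam * wtilmax * wdotmax) * lamMax hP.1
                    / ((1 - ξ) * lamMin hR.1)))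
              / lamMin hP.1)
          * (1 + Real.sqrt (κ * lamMax hP.1 / (2 * ξ * lamMin hR.1))) := by
  have hα : 0 < (1 - ξ) * lamMin hR.1 / lamMax hP.1 := by
    have := lamMin_pos hn hR
    have := lamMax_pos hn hP
    have : 0 < 1 - ξ := by linarith
    positivity
  have hV := le_max_of_hasDerivAt_le_mul_sub hα fun t ht =>
    exists_hasDerivAt_Vstar_le hn hLhalfDiag.isSymm hLhalfSq hR hP hLyap hγ hκ hη hξ0 hξ1
      (hWdotbnd t ht) (hWtbnd t ht) (he t ht) (heL t ht) (hxt t ht) (hWt t ht) (hUproj t ht)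
  intro t ht
  have hVt := hV t ht
  rw [heL0, hxt0] at hVt
  exact normInf_add_le_of_Vstar_le hn hR hP hγ hκ hη hξ0 hVt

theorem statement17
    {n N m : ℕ} (hn : 0 < n) (hN : 0 < N) (hm : 0 < m)
    (Ar : Matrix (Fin n) (Fin n) ℝ) (B : Matrix (Fin n) (Fin m) ℝ)
    (Lam Lhalf : Matrix (Fin m) (Fin m) ℝ) (R P : Matrix (Fin n) (Fin n) ℝ)
    (hAr : Hurwitz Ar)
    (hLam : Lam.PosDef) (hLamDiag : Lam.IsDiag)
    (hLhalfDiag : Lhalf.IsDiag) (hLhalfSq : Lhalf * Lhalf = Lam)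
    (hR : R.PosDef) (hP : P.PosDef)
    (hLyap : Arᵀ * P + P * Ar + R = 0)
    (γ κ η ξ : ℝ) (hγ : 0 < γ) (hκ : 0 < κ) (hη : 0 < η) (hξ0 : 0 < ξ) (hξ1 : ξ < 1)
    (σx : ℝ → Fin N → ℝ)
    (W Wdot Wt U : ℝ → Matrix (Fin N) (Fin m) ℝ)
    (wdotmax wtilmax : ℝ)
    (hWder : ∀ t ≥ (0:ℝ), ∀ i j, HasDerivAt (fun s => W s i j) (Wdot t i j) t)
    (hWdotbnd : ∀ t ≥ (0:ℝ), normF (Wdot t) ≤ wdotmax)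
    (hWtbnd : ∀ t ≥ (0:ℝ), normF (Wt t) ≤ wtilmax)
    (e eL xt : ℝ → Fin n → ℝ)
    (heL0 : eL 0 = 0) (hxt0 : xt 0 = 0)
    (he : ∀ t ≥ (0:ℝ), HasDerivAt e
          (Ar *ᵥ e t - (B * Lam * (Wt t)ᵀ) *ᵥ σx t - κ • (e t - eL t)) t)
    (heL : ∀ t ≥ (0:ℝ), HasDerivAt eL (Ar *ᵥ eL t + η • (e t - eL t)) t)
    (hxt : ∀ t ≥ (0:ℝ), HasDerivAt xt (Ar *ᵥ xt t + κ • (e t - eL t)) t)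
    (hWt : ∀ t ≥ (0:ℝ), ∀ i j, HasDerivAt (fun s => Wt s i j)
          (γ * U t i j - Wdot t i j) t)
    (hUproj : ∀ t ≥ (0:ℝ),
      ((Lam * (Wt t)ᵀ) * (U t - vecMulVec (σx t) ((e t) ᵥ* (P * B)))).trace ≤ 0)
    : ∀ t ≥ (0:ℝ),
      normInf (e t + xt t)
        ≤ Real.sqrt
            ((max (Vstar γ κ η ξ P R hP.1 hR.1 Lhalf (e 0) (Wt 0) 0 0)
                (γ⁻¹ * normF Lam * wtilmax ^ 2
                  + (2 * γ⁻¹ * normF Lam * wtilmax * wdotmax) * lamMax hP.1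
                    / ((1 - ξ) * lamMin hR.1)))
              / lamMin hP.1)
          * (1 + Real.sqrt (κ * lamMax hP.1 / (2 * ξ * lamMin hR.1))) :=
  statement17_general hn Ar B Lam Lhalf R P hLhalfDiag hLhalfSq hR hP hLyap γ κ η ξ hγ hκ hη hξ0 hξ1
    σx Wdot Wt U wdotmax wtilmax hWdotbnd hWtbnd e eL xt heL0 hxt0 he heL hxt hWt hUproj
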